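/- arXiv:math/0404189 — 5 statements merged into one kernel-verified Lean document; each statement's English description precedes it below -/
import Mathlib

section
/- Let b ∈ (0, ∞] and let m : [0, b] → [0, ∞] be continuous, strictly increasing and surjective onto [0, ∞]. Let τ be a triangle function on distribution functions such that τ(ε_s, ε_t) = ε_{s+t} for all s, t ≥ 0, where ε_t is the unit step distribution at t. If τ(F, G)∘m ≥ τ(F∘m, G∘m) for all distance distribution functions F, G (i.e., m is τ-superadditive), then m is superadditive: m(x + y) ≥ m(x) + m(y) for all x, y with x + y ≤ b. -/
open scoped ENNReal

noncomputable section

/-- Distribution-type functions on `[0,∞]`. -/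
abbrev DF := ℝ≥0∞ → ℝ

/-- The unit step distribution `ε_t`. -/
def stepDF (t : ℝ≥0∞) : DF := fun x => if x ≤ t then 0 else 1

/-- `F` is a distance distribution function: nondecreasing, left-continuous,
`F 0 = 0`, `F ∞ = 1`, with values in `[0,1]`. -/
def IsDDF (F : DF) : Prop :=
  Monotone F ∧ F 0 = 0 ∧ F ⊤ = 1 ∧ (∀ x, F x ∈ Set.Icc (0:ℝ) 1) ∧
    ∀ x : ℝ≥0∞, x ≠ 0 → Filter.Tendsto F (nhdsWithin x (Set.Iio x)) (nhds (F x))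

/-- `τ` is a triangle function: it maps `Δ⁺ × Δ⁺` to `Δ⁺`, is commutative,
associative, nondecreasing in each place, and has `ε₀` as identity. -/
def IsTriangleFn (τ : DF → DF → DF) : Prop :=
  (∀ F G, IsDDF F → IsDDF G → IsDDF (τ F G)) ∧
  (∀ F G, τ F G = τ G F) ∧
  (∀ F G H, τ (τ F G) H = τ F (τ G H)) ∧
  (∀ F G H, F ≤ G → τ F H ≤ τ G H) ∧
  (∀ F, IsDDF F → τ F (stepDF 0) = F)

/-- Membership in `M_b`: `m` is continuous and strictly increasing on `[0,b]`
and maps `[0,b]` onto `[0,∞]`. -/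
def MemMb (b : ℝ≥0∞) (m : ℝ≥0∞ → ℝ≥0∞) : Prop :=
  0 < b ∧ ContinuousOn m (Set.Iic b) ∧ StrictMonoOn m (Set.Iic b) ∧
    m '' Set.Iic b = Set.univ

/-- The `m`-transform `Fm` of `F`: `Fm x = F (m x)` for `x < b`, the left limit
at `x = b` (for finite `b`), and `1` for `x > b`. -/
def mTransform (b : ℝ≥0∞) (m : ℝ≥0∞ → ℝ≥0∞) (F : DF) : DF :=
  if b = ⊤ then fun x => F (m x)
  else fun x =>
    if x < b then F (m x)
    else if x = b then ⨆ y : Set.Iio b, F (m y)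
    else 1

lemma mTransform_apply_of_lt (b : ℝ≥0∞) (m : ℝ≥0∞ → ℝ≥0∞) (F : DF) {z : ℝ≥0∞}
    (hz : z < b) : mTransform b m F z = F (m z) := by
  by_cases hb : b = ⊤ <;> simp [mTransform, hb, hz]

lemma mTransform_apply_self (b : ℝ≥0∞) (m : ℝ≥0∞ → ℝ≥0∞) (F : DF) (hb : b ≠ ⊤) :
    mTransform b m F b = ⨆ y : Set.Iio b, F (m y) := by
  simp [mTransform, hb]

lemma mTransform_apply_of_gt (b : ℝ≥0∞) (m : ℝ≥0∞ → ℝ≥0∞) (F : DF) {z : ℝ≥0∞}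
    (hb : b ≠ ⊤) (hz : b < z) : mTransform b m F z = 1 := by
  simp [mTransform, hb, not_lt.2 hz.le, hz.ne']

lemma stepDF_nonneg (t z : ℝ≥0∞) : 0 ≤ stepDF t z := by
  simp only [stepDF]; split_ifs <;> norm_num

lemma stepDF_le_one (t z : ℝ≥0∞) : stepDF t z ≤ 1 := by
  simp only [stepDF]; split_ifs <;> norm_num

lemma isDDF_step (t : ℝ≥0∞) (ht : t ≠ ⊤) : IsDDF (stepDF t) := by
  refine ⟨?_, ?_, ?_, ?_, ?_⟩
  · intro a c hac
    simp only [stepDF]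
    by_cases h2 : c ≤ t
    · simp [hac.trans h2, h2]
    · split_ifs <;> norm_num
  · simp [stepDF]
  · simp [stepDF, lt_top_iff_ne_top.2 ht, top_le_iff, ht]
  · intro x; simp only [stepDF]; split_ifs <;> norm_num
  · intro x hx
    rcases le_or_gt x t with h | h
    · have hval : ∀ z ∈ Set.Iio x, stepDF t z = 0 := by
        intro z hz; simp [stepDF, (le_of_lt (lt_of_lt_of_le hz h))]
      have hx0 : stepDF t x = 0 := by simp [stepDF, h]
      rw [hx0]
      refine Filter.Tendsto.congr' ?_ tendsto_const_nhds
      filter_upwards [self_mem_nhdsWithin] with z hz using (hval z hz).symm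
    · have hx1 : stepDF t x = 1 := by simp [stepDF, not_le.2 h]
      rw [hx1]
      refine Filter.Tendsto.congr' ?_ tendsto_const_nhds
      have : Set.Ioi t ∈ nhdsWithin x (Set.Iio x) :=
        mem_nhdsWithin_of_mem_nhds (isOpen_Ioi.mem_nhds h)
      filter_upwards [this] with z hz
      simp [stepDF, not_le.2 (Set.mem_Ioi.1 hz)]

lemma step_le_mTransform (b : ℝ≥0∞) (m : ℝ≥0∞ → ℝ≥0∞) (hm : MemMb b m)
    (x : ℝ≥0∞) (hx : x < b) : stepDF x ≤ mTransform b m (stepDF (m x)) := by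
  have hsm := hm.2.2.1
  intro z
  have hgen : ∀ w : ℝ≥0∞, w ≤ b → stepDF x w ≤ stepDF (m x) (m w) := by
    intro w hw
    rcases le_or_gt w x with h | h
    · have : stepDF x w = 0 := by simp [stepDF, h]
      rw [this]; exact stepDF_nonneg _ _
    · have hmlt : m x < m w := hsm (le_of_lt hx) hw h
      have : stepDF (m x) (m w) = 1 := by simp [stepDF, not_le.2 hmlt]
      rw [this]; exact stepDF_le_one _ _
  by_cases hb : b = ⊤
  · simp only [mTransform, hb, if_pos rfl]
    exact hgen z (hb ▸ le_top)
  · rcases lt_trichotomy z b with hzb | hzb | hzb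
    · rw [mTransform_apply_of_lt b m _ hzb]; exact hgen z (le_of_lt hzb)
    · rw [hzb, mTransform_apply_self b m _ hb]
      obtain ⟨w, hw1, hw2⟩ := exists_between hx
      have hbdd : BddAbove (Set.range fun y : Set.Iio b => stepDF (m x) (m y)) := by
        refine ⟨1, ?_⟩
        rintro r ⟨i, rfl⟩
        exact stepDF_le_one _ _
      have hle : stepDF x w ≤ ⨆ y : Set.Iio b, stepDF (m x) (m y) :=
        le_trans (hgen w (le_of_lt hw2)) (le_ciSup hbdd ⟨w, hw2⟩)
      have hzw : stepDF x b ≤ stepDF x w := by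
        have : stepDF x b = 1 := by simp [stepDF, not_le.2 hx]
        rw [this]
        simp [stepDF, not_le.2 hw1]
      exact hzw.trans hle
    · rw [mTransform_apply_of_gt b m _ hb hzb]
      exact stepDF_le_one _ _

/-- If `τ(ε_s, ε_t) = ε_{s+t}` and `m ∈ M_b` is `τ`-superadditive, then `m` is
superadditive. -/
theorem tau_superadditive_implies_superadditive
    (b : ℝ≥0∞) (m : ℝ≥0∞ → ℝ≥0∞) (hm : MemMb b m)
    (τ : DF → DF → DF) (hτ : IsTriangleFn τ)
    (hstep : ∀ s t : ℝ≥0∞, τ (stepDF s) (stepDF t) = stepDF (s + t))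
    (hsuper : ∀ F G, IsDDF F → IsDDF G →
      mTransform b m (τ F G) ≥ τ (mTransform b m F) (mTransform b m G)) :
    ∀ x y : ℝ≥0∞, x + y ≤ b → m x + m y ≤ m (x + y) := by
  have hsm := hm.2.2.1
  have hmb : m b = ⊤ := by
    have : (⊤ : ℝ≥0∞) ∈ m '' Set.Iic b := hm.2.2.2 ▸ Set.mem_univ _
    obtain ⟨w, hw, hweq⟩ := this
    have : m w ≤ m b := hsm.monotoneOn hw (Set.mem_Iic.2 le_rfl) hw
    rw [hweq] at this
    exact top_le_iff.1 this
  intro x y hxy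
  rcases eq_or_lt_of_le hxy with heq | hlt
  · rw [heq, hmb]; exact le_top
  · have hx : x < b := lt_of_le_of_lt le_self_add hlt
    have hy : y < b := lt_of_le_of_lt le_add_self hlt
    have hmx : m x ≠ ⊤ := by
      have : m x < m b := hsm (le_of_lt hx) (Set.mem_Iic.2 le_rfl) hx
      rw [hmb] at this; exact this.ne
    have hmy : m y ≠ ⊤ := by
      have : m y < m b := hsm (le_of_lt hy) (Set.mem_Iic.2 le_rfl) hy
      rw [hmb] at this; exact this.ne
    have hDx := isDDF_step _ hmx
    have hDy := isDDF_step _ hmy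
    have h2 : stepDF (x + y) ≤ mTransform b m (stepDF (m x + m y)) := by
      calc stepDF (x + y) = τ (stepDF x) (stepDF y) := (hstep x y).symm
        _ ≤ τ (mTransform b m (stepDF (m x))) (stepDF y) :=
            hτ.2.2.2.1 _ _ _ (step_le_mTransform b m hm x hx)
        _ = τ (stepDF y) (mTransform b m (stepDF (m x))) := hτ.2.1 _ _
        _ ≤ τ (mTransform b m (stepDF (m y))) (mTransform b m (stepDF (m x))) :=
            hτ.2.2.2.1 _ _ _ (step_le_mTransform b m hm y hy)
        _ = τ (mTransform b m (stepDF (m x))) (mTransform b m (stepDF (m y))) := hτ.2.1 _ _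
        _ ≤ mTransform b m (τ (stepDF (m x)) (stepDF (m y))) := hsuper _ _ hDx hDy
        _ = mTransform b m (stepDF (m x + m y)) := by rw [hstep]
    have key : ∀ z, x + y < z → z < b → m x + m y ≤ m z := by
      intro z h1z h2z
      have hval := h2 z
      have hL : stepDF (x + y) z = 1 := by simp [stepDF, not_le.2 h1z]
      have hR : mTransform b m (stepDF (m x + m y)) z = stepDF (m x + m y) (m z) :=
        mTransform_apply_of_lt b m _ h2z
      rw [hL, hR] at hval
      by_contra hcon
      push_neg at hcon
      have : stepDF (m x + m y) (m z) = 0 := by simp [stepDF, le_of_lt hcon]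
      rw [this] at hval
      linarith
    have hne : (nhdsWithin (x + y) (Set.Ioi (x + y))).NeBot :=
      nhdsGT_neBot_of_exists_gt ⟨b, hlt⟩
    have hIic : Set.Iic b ∈ nhdsWithin (x + y) (Set.Ioi (x + y)) :=
      mem_nhdsWithin_of_mem_nhds
        (Filter.mem_of_superset (isOpen_Iio.mem_nhds hlt) Set.Iio_subset_Iic_self)
    have htend : Filter.Tendsto m (nhdsWithin (x + y) (Set.Ioi (x + y))) (nhds (m (x + y))) :=
      (hm.2.1 (x + y) (Set.mem_Iic.2 hxy)).mono_left (nhdsWithin_le_iff.2 hIic)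
    refine ge_of_tendsto htend ?_
    have hmemIio : Set.Iio b ∈ nhdsWithin (x + y) (Set.Ioi (x + y)) :=
      mem_nhdsWithin_of_mem_nhds (isOpen_Iio.mem_nhds hlt)
    filter_upwards [self_mem_nhdsWithin, hmemIio] with z hz hzb using key z hz hzb
end
end

section
/- Let T be a continuous t-norm and m ∈ M_b (continuous, strictly increasing from [0,b] onto [0,∞]). Then m is τ_T-superadditive (i.e., τ_T(F,G)∘m ≥ τ_T(F∘m, G∘m) for all F, G ∈ Δ⁺) if and only if m is superadditive (m(x+y) ≥ m(x) + m(y) for all x, y ∈ [0,b] with x + y ≤ b). -/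
open scoped ENNReal

noncomputable section

/-- `T` is a t-norm on `[0,1]`: commutative, associative, nondecreasing in each
variable, with `1` as identity, mapping `[0,1]²` into `[0,1]`. -/
def IsTNorm (T : ℝ → ℝ → ℝ) : Prop :=
  (∀ a ∈ Set.Icc (0:ℝ) 1, ∀ b ∈ Set.Icc (0:ℝ) 1, T a b ∈ Set.Icc (0:ℝ) 1) ∧
  (∀ a b, T a b = T b a) ∧
  (∀ a b c, T (T a b) c = T a (T b c)) ∧
  (∀ a b c, a ≤ b → T a c ≤ T b c) ∧
  (∀ a ∈ Set.Icc (0:ℝ) 1, T a 1 = a)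

/-- The triangle function `τ_T(F,G)(x) = sup { T (F u) (G v) : u + v = x }`. -/
def tauT (T : ℝ → ℝ → ℝ) (F G : DF) : DF :=
  fun x => ⨆ p : {q : ℝ≥0∞ × ℝ≥0∞ // q.1 + q.2 = x}, T (F p.1.1) (G p.1.2)

/-- The pointwise triangle function `𝐓(F,G)(x) = T (F x) (G x)`. -/
def pointT (T : ℝ → ℝ → ℝ) (F G : DF) : DF := fun x => T (F x) (G x)

/-! ### Auxiliary lemmas -/

instance pairNonempty (x : ℝ≥0∞) : Nonempty {q : ℝ≥0∞ × ℝ≥0∞ // q.1 + q.2 = x} :=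
  ⟨⟨(x, 0), add_zero x⟩⟩

/-- Bounded in `[0,1]`. -/
def Bnd (F : DF) : Prop := ∀ x, F x ∈ Set.Icc (0:ℝ) 1

section TNorm

variable {T : ℝ → ℝ → ℝ}

lemma T_mono_right (hT : IsTNorm T) (a : ℝ) {c d : ℝ} (h : c ≤ d) : T a c ≤ T a d := by
  rw [hT.2.1 a c, hT.2.1 a d]; exact hT.2.2.2.1 c d a h

lemma T_one_one (hT : IsTNorm T) : T 1 1 = 1 :=
  hT.2.2.2.2 1 ⟨zero_le_one, le_refl 1⟩

lemma T_zero_left (hT : IsTNorm T) {c : ℝ} (hc : c ∈ Set.Icc (0:ℝ) 1) : T 0 c = 0 := by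
  refine le_antisymm ?_ (hT.1 0 ⟨le_refl 0, zero_le_one⟩ c hc).1
  have h1 : T 0 c ≤ T 0 1 := T_mono_right hT 0 hc.2
  rwa [hT.2.2.2.2 0 ⟨le_refl 0, zero_le_one⟩] at h1

lemma T_zero_right (hT : IsTNorm T) {c : ℝ} (hc : c ∈ Set.Icc (0:ℝ) 1) : T c 0 = 0 := by
  rw [hT.2.1]; exact T_zero_left hT hc

end TNorm

section Tau

variable {T : ℝ → ℝ → ℝ} {F G : DF}

lemma tauT_bddAbove (hT : IsTNorm T) (hF : Bnd F) (hG : Bnd G) (x : ℝ≥0∞) :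
    BddAbove (Set.range fun p : {q : ℝ≥0∞ × ℝ≥0∞ // q.1 + q.2 = x} =>
      T (F p.1.1) (G p.1.2)) := by
  refine ⟨1, ?_⟩
  rintro y ⟨p, rfl⟩
  exact (hT.1 _ (hF _) _ (hG _)).2

lemma le_tauT (hT : IsTNorm T) (hF : Bnd F) (hG : Bnd G) {u v x : ℝ≥0∞} (h : u + v = x) :
    T (F u) (G v) ≤ tauT T F G x :=
  le_ciSup (tauT_bddAbove hT hF hG x) ⟨(u, v), h⟩

lemma tauT_le_one (hT : IsTNorm T) (hF : Bnd F) (hG : Bnd G) (x : ℝ≥0∞) :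
    tauT T F G x ≤ 1 :=
  ciSup_le fun p => (hT.1 _ (hF _) _ (hG _)).2

lemma tauT_nonneg (hT : IsTNorm T) (hF : Bnd F) (hG : Bnd G) (x : ℝ≥0∞) :
    0 ≤ tauT T F G x :=
  le_trans (hT.1 _ (hF x) _ (hG 0)).1 (le_tauT hT hF hG (add_zero x))

lemma tauT_bnd (hT : IsTNorm T) (hF : Bnd F) (hG : Bnd G) : Bnd (tauT T F G) :=
  fun x => ⟨tauT_nonneg hT hF hG x, tauT_le_one hT hF hG x⟩

lemma tauT_mono (hT : IsTNorm T) (hF : Bnd F) (hG : Bnd G) (hGm : Monotone G) :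
    Monotone (tauT T F G) := by
  intro s s' hss
  refine ciSup_le ?_
  rintro ⟨⟨u, v⟩, huv⟩
  have h2 : u + (v + (s' - s)) = s' := by
    rw [← add_assoc, huv, add_tsub_cancel_of_le hss]
  calc T (F u) (G v) ≤ T (F u) (G (v + (s' - s))) :=
        T_mono_right hT _ (hGm le_self_add)
    _ ≤ tauT T F G s' := le_tauT hT hF hG h2

end Tau

section Step

lemma stepDF_bnd (t : ℝ≥0∞) : Bnd (stepDF t) := by
  intro x; unfold stepDF; split <;> norm_num

lemma stepDF_mono (t : ℝ≥0∞) : Monotone (stepDF t) := by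
  intro x y hxy
  unfold stepDF
  by_cases hx : x ≤ t <;> by_cases hy : y ≤ t <;> simp [hx, hy]
  exact (hx (hxy.trans hy)).elim

lemma isDDF_stepDF {t : ℝ≥0∞} (ht : t ≠ ⊤) : IsDDF (stepDF t) := by
  refine ⟨stepDF_mono t, if_pos (zero_le : 0 ≤ t), if_neg (by simpa [top_le_iff] using ht),
    stepDF_bnd t, ?_⟩
  intro x hx
  by_cases hxt : x ≤ t
  · have hev : ∀ᶠ y in nhdsWithin x (Set.Iio x), stepDF t y = stepDF t x := by
      filter_upwards [self_mem_nhdsWithin] with y hy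
      have hy' : y ≤ t := (le_of_lt hy).trans hxt
      simp [stepDF, hy', hxt]
    exact tendsto_const_nhds.congr' (by filter_upwards [hev] with y hy; exact hy.symm)
  · have htx : t < x := lt_of_not_ge hxt
    have hmem : Set.Ioi t ∈ nhdsWithin x (Set.Iio x) :=
      nhdsWithin_le_nhds (isOpen_Ioi.mem_nhds htx)
    have hev : ∀ᶠ y in nhdsWithin x (Set.Iio x), stepDF t y = stepDF t x := by
      filter_upwards [hmem] with y hy
      simp [stepDF, not_le.2 (show t < y from hy), hxt]
    exact tendsto_const_nhds.congr' (by filter_upwards [hev] with y hy; exact hy.symm)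

lemma tauT_stepDF {T : ℝ → ℝ → ℝ} (hT : IsTNorm T) {s t : ℝ≥0∞} (hs : s ≠ ⊤) (ht : t ≠ ⊤) :
    tauT T (stepDF s) (stepDF t) = stepDF (s + t) := by
  funext x
  by_cases hx : x ≤ s + t
  · have h0 : (fun p : {q : ℝ≥0∞ × ℝ≥0∞ // q.1 + q.2 = x} =>
        T (stepDF s p.1.1) (stepDF t p.1.2)) = fun _ => (0:ℝ) := by
      funext p
      obtain ⟨⟨u, v⟩, huv⟩ := p
      by_cases hu : u ≤ s
      · show T (stepDF s u) (stepDF t v) = 0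
        rw [show stepDF s u = 0 from if_pos hu]
        exact T_zero_left hT (stepDF_bnd t v)
      · have hv : v ≤ t := by
          by_contra hv
          exact absurd (huv ▸ ENNReal.add_lt_add (lt_of_not_ge hu) (lt_of_not_ge hv))
            (not_lt.2 hx)
        show T (stepDF s u) (stepDF t v) = 0
        rw [show stepDF t v = 0 from if_pos hv]
        exact T_zero_right hT (stepDF_bnd s u)
    rw [show stepDF (s + t) x = 0 from if_pos hx]
    show (⨆ p : {q : ℝ≥0∞ × ℝ≥0∞ // q.1 + q.2 = x}, T (stepDF s p.1.1) (stepDF t p.1.2)) = 0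
    rw [h0, ciSup_const]
  · have hx' : s + t < x := lt_of_not_ge hx
    set d := x - (s + t) with hd
    have hd0 : d ≠ 0 := (tsub_pos_of_lt hx').ne'
    have hhalf : (0:ℝ≥0∞) < d / 2 := ENNReal.half_pos hd0
    have hu : s < s + d / 2 := ENNReal.lt_add_right hs hhalf.ne'
    have hv : t < t + d / 2 := ENNReal.lt_add_right ht hhalf.ne'
    have hsum : (s + d / 2) + (t + d / 2) = x := by
      rw [add_add_add_comm, ENNReal.add_halves, hd, add_tsub_cancel_of_le (le_of_lt hx')]
    have hterm : T (stepDF s (s + d / 2)) (stepDF t (t + d / 2)) = 1 := by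
      rw [show stepDF s (s + d / 2) = 1 from if_neg (not_le.2 hu),
        show stepDF t (t + d / 2) = 1 from if_neg (not_le.2 hv)]
      exact T_one_one hT
    rw [show stepDF (s + t) x = 1 from if_neg hx]
    refine le_antisymm (tauT_le_one hT (stepDF_bnd s) (stepDF_bnd t) x) ?_
    calc (1:ℝ) = T (stepDF s (s + d / 2)) (stepDF t (t + d / 2)) := hterm.symm
      _ ≤ tauT T (stepDF s) (stepDF t) x :=
        le_tauT hT (stepDF_bnd s) (stepDF_bnd t) hsum

end Step

section Mb

variable {b : ℝ≥0∞} {m : ℝ≥0∞ → ℝ≥0∞}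

lemma m_surj (hm : MemMb b m) (s : ℝ≥0∞) : ∃ z, z ≤ b ∧ m z = s := by
  have h : s ∈ m '' Set.Iic b := hm.2.2.2 ▸ Set.mem_univ s
  obtain ⟨z, hz, hmz⟩ := h
  exact ⟨z, hz, hmz⟩

lemma m_zero (hm : MemMb b m) : m 0 = 0 := by
  obtain ⟨z, hz, hmz⟩ := m_surj hm 0
  have h := hm.2.2.1.monotoneOn (Set.mem_Iic.2 (zero_le : 0 ≤ b)) (Set.mem_Iic.2 hz) (zero_le : 0 ≤ z)
  rw [hmz] at h
  exact le_antisymm h zero_le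

lemma m_b_top (hm : MemMb b m) : m b = ⊤ := by
  obtain ⟨z, hz, hmz⟩ := m_surj hm ⊤
  have h := hm.2.2.1.monotoneOn (Set.mem_Iic.2 hz) (Set.mem_Iic.2 (le_refl b)) hz
  rw [hmz] at h
  exact top_le_iff.1 h

lemma m_lt_top (hm : MemMb b m) {x : ℝ≥0∞} (hx : x < b) : m x < ⊤ := by
  rw [← m_b_top hm]
  exact hm.2.2.1 (Set.mem_Iic.2 hx.le) (Set.mem_Iic.2 (le_refl b)) hx

end Mb

section Transform

variable {b : ℝ≥0∞} {m : ℝ≥0∞ → ℝ≥0∞} {F : DF}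

lemma mTransform_apply_lt {x : ℝ≥0∞} (hx : x < b) : mTransform b m F x = F (m x) := by
  by_cases hb : b = ⊤ <;> simp [mTransform, hb, hx]

lemma mTransform_apply_top (hb : b = ⊤) (x : ℝ≥0∞) : mTransform b m F x = F (m x) := by
  simp [mTransform, hb]

lemma mTransform_apply_eq (hb : b ≠ ⊤) :
    mTransform b m F b = ⨆ y : Set.Iio b, F (m y) := by
  simp [mTransform, hb]

lemma mTransform_apply_gt (hb : b ≠ ⊤) {x : ℝ≥0∞} (hx : b < x) :
    mTransform b m F x = 1 := by
  simp [mTransform, hb, not_lt.2 hx.le, hx.ne']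

lemma mTransform_bnd (hb : 0 < b) (hF : Bnd F) : Bnd (mTransform b m F) := by
  intro x
  by_cases hbt : b = ⊤
  · rw [mTransform_apply_top hbt]; exact hF _
  rcases lt_trichotomy x b with h | h | h
  · rw [mTransform_apply_lt h]; exact hF _
  · subst h
    rw [mTransform_apply_eq hbt]
    haveI : Nonempty (Set.Iio x) := ⟨⟨0, hb⟩⟩
    have hbdd : BddAbove (Set.range fun y : Set.Iio x => F (m y)) := by
      refine ⟨1, ?_⟩; rintro r ⟨y, rfl⟩; exact (hF _).2
    constructor
    · exact le_trans (hF (m 0)).1 (le_ciSup hbdd ⟨0, hb⟩)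
    · exact ciSup_le fun y => (hF _).2
  · rw [mTransform_apply_gt hbt h]; norm_num

end Transform

/-- For a continuous t-norm `T` and `m ∈ M_b`, the transform `m` is
`τ_T`-superadditive if and only if `m` is superadditive. -/
theorem tauT_superadditive_iff_superadditive
    (b : ℝ≥0∞) (m : ℝ≥0∞ → ℝ≥0∞) (hm : MemMb b m)
    (T : ℝ → ℝ → ℝ) (hT : IsTNorm T)
    (hTc : ContinuousOn (fun p : ℝ × ℝ => T p.1 p.2)
      (Set.Icc (0:ℝ) 1 ×ˢ Set.Icc (0:ℝ) 1)) :
    (∀ F G, IsDDF F → IsDDF G →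
        mTransform b m (tauT T F G) ≥ tauT T (mTransform b m F) (mTransform b m G)) ↔
      ∀ x y : ℝ≥0∞, x + y ≤ b → m x + m y ≤ m (x + y) := by
  have hb : 0 < b := hm.1
  have hms : StrictMonoOn m (Set.Iic b) := hm.2.2.1
  constructor
  · -- superadditive transform ⇒ superadditive m
    intro H x y hxy
    by_cases hxyb : x + y = b
    · rw [hxyb, m_b_top hm]; exact le_top
    have hz : x + y < b := lt_of_le_of_ne hxy hxyb
    have hxb : x < b := lt_of_le_of_lt le_self_add hz
    have hyb : y < b := lt_of_le_of_lt le_add_self hz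
    by_contra hcon
    have hlt : m (x + y) < m x + m y := lt_of_not_ge hcon
    have hmx : m x ≠ ⊤ := (m_lt_top hm hxb).ne
    have hmy : m y ≠ ⊤ := (m_lt_top hm hyb).ne
    set s := m x + m y with hs
    have hsne : s ≠ ⊤ := ENNReal.add_ne_top.2 ⟨hmx, hmy⟩
    obtain ⟨z', hz'b, hmz'⟩ := m_surj hm s
    have hz'lt : z' < b := by
      refine lt_of_le_of_ne hz'b ?_
      intro h; rw [h, m_b_top hm] at hmz'; exact hsne hmz'.symm
    have hzz' : x + y < z' := by
      have := (hms.lt_iff_lt (Set.mem_Iic.2 hxy) (Set.mem_Iic.2 hz'b)).1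
      exact this (hmz' ▸ hlt)
    set d := z' - (x + y) with hd
    have hd0 : d ≠ 0 := (tsub_pos_of_lt hzz').ne'
    have hhalf : (0:ℝ≥0∞) < d / 2 := ENNReal.half_pos hd0
    have hxt : x ≠ ⊤ := (lt_of_lt_of_le hxb le_top).ne
    have hyt : y ≠ ⊤ := (lt_of_lt_of_le hyb le_top).ne
    set x' := x + d / 2 with hx'
    set y' := y + d / 2 with hy'
    have hxx' : x < x' := ENNReal.lt_add_right hxt hhalf.ne'
    have hyy' : y < y' := ENNReal.lt_add_right hyt hhalf.ne'
    have hsum : x' + y' = z' := by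
      rw [hx', hy', add_add_add_comm, ENNReal.add_halves, hd,
        add_tsub_cancel_of_le (le_of_lt hzz')]
    have hx'lt : x' < b := lt_of_le_of_lt (hsum ▸ le_self_add) hz'lt
    have hy'lt : y' < b := lt_of_le_of_lt (hsum ▸ le_add_self) hz'lt
    set F := stepDF (m x) with hF
    set G := stepDF (m y) with hG
    have hDF : IsDDF F := isDDF_stepDF hmx
    have hDG : IsDDF G := isDDF_stepDF hmy
    have key := H F G hDF hDG z'
    have hrhs : mTransform b m (tauT T F G) z' = 0 := by
      rw [mTransform_apply_lt hz'lt, hF, hG, tauT_stepDF hT hmx hmy, hmz']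
      exact if_pos (le_refl s)
    have hFm : mTransform b m F x' = 1 := by
      rw [mTransform_apply_lt hx'lt, hF]
      exact if_neg (not_le.2 (hms (Set.mem_Iic.2 hxb.le) (Set.mem_Iic.2 hx'lt.le) hxx'))
    have hGm : mTransform b m G y' = 1 := by
      rw [mTransform_apply_lt hy'lt, hG]
      exact if_neg (not_le.2 (hms (Set.mem_Iic.2 hyb.le) (Set.mem_Iic.2 hy'lt.le) hyy'))
    have hlhs : (1:ℝ) ≤ tauT T (mTransform b m F) (mTransform b m G) z' := by
      calc (1:ℝ) = T (mTransform b m F x') (mTransform b m G y') := by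
            rw [hFm, hGm, T_one_one hT]
        _ ≤ _ := le_tauT hT (mTransform_bnd hb (stepDF_bnd _))
            (mTransform_bnd hb (stepDF_bnd _)) hsum
    rw [hrhs] at key
    linarith [le_trans hlhs key]
  · -- superadditive m ⇒ superadditive transform
    intro hsa F G hF hG
    have hFb : Bnd F := hF.2.2.2.1
    have hGb : Bnd G := hG.2.2.2.1
    have hGm : Monotone G := hG.1
    have hτb : Bnd (tauT T F G) := tauT_bnd hT hFb hGb
    have hτm : Monotone (tauT T F G) := tauT_mono hT hFb hGb hGm
    have hFmb : Bnd (mTransform b m F) := mTransform_bnd hb hFb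
    have hGmb : Bnd (mTransform b m G) := mTransform_bnd hb hGb
    intro x
    by_cases hbt : b = ⊤
    · rw [mTransform_apply_top hbt]
      refine ciSup_le ?_
      rintro ⟨⟨u, v⟩, huv⟩
      rw [show mTransform b m F u = F (m u) from mTransform_apply_top hbt u,
        show mTransform b m G v = G (m v) from mTransform_apply_top hbt v]
      calc T (F (m u)) (G (m v)) ≤ tauT T F G (m u + m v) := le_tauT hT hFb hGb rfl
        _ ≤ tauT T F G (m x) := hτm (huv ▸ hsa u v (hbt ▸ le_top))
    rcases lt_trichotomy x b with hxb | hxb | hxb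
    · rw [mTransform_apply_lt hxb]
      refine ciSup_le ?_
      rintro ⟨⟨u, v⟩, huv⟩
      have hub : u < b := lt_of_le_of_lt (huv ▸ le_self_add) hxb
      have hvb : v < b := lt_of_le_of_lt (huv ▸ le_add_self) hxb
      rw [show mTransform b m F u = F (m u) from mTransform_apply_lt hub,
        show mTransform b m G v = G (m v) from mTransform_apply_lt hvb]
      calc T (F (m u)) (G (m v)) ≤ tauT T F G (m u + m v) := le_tauT hT hFb hGb rfl
        _ ≤ tauT T F G (m x) := hτm (huv ▸ hsa u v (huv ▸ hxb.le))
    · subst hxb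
      rw [mTransform_apply_eq hbt]
      haveI : Nonempty (Set.Iio x) := ⟨⟨0, hb⟩⟩
      have hbdd : BddAbove (Set.range fun y : Set.Iio x => tauT T F G (m y)) := by
        refine ⟨1, ?_⟩; rintro r ⟨y, rfl⟩; exact (hτb _).2
      have hsup0 : (0:ℝ) ≤ ⨆ y : Set.Iio x, tauT T F G (m y) :=
        le_trans (hτb (m 0)).1 (le_ciSup hbdd ⟨0, hb⟩)
      refine ciSup_le ?_
      rintro ⟨⟨u, v⟩, huv⟩
      by_cases hub : u < x
      · by_cases hvb : v < x
        · have hmuv : m u + m v ≠ ⊤ :=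
            ENNReal.add_ne_top.2 ⟨(m_lt_top hm hub).ne, (m_lt_top hm hvb).ne⟩
          obtain ⟨z', hz'b, hmz'⟩ := m_surj hm (m u + m v)
          have hz'lt : z' < x := by
            refine lt_of_le_of_ne hz'b ?_
            intro h; rw [h, m_b_top hm] at hmz'; exact hmuv hmz'.symm
          rw [show mTransform x m F u = F (m u) from mTransform_apply_lt hub,
            show mTransform x m G v = G (m v) from mTransform_apply_lt hvb]
          calc T (F (m u)) (G (m v)) ≤ tauT T F G (m u + m v) := le_tauT hT hFb hGb rfl
            _ = tauT T F G (m z') := by rw [hmz']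
            _ ≤ _ := le_ciSup hbdd ⟨z', hz'lt⟩
        · -- v = x, u = 0
          have hvx : v = x := le_antisymm (huv ▸ le_add_self) (not_lt.1 hvb)
          have hu0 : u = 0 := by
            have h : u + x = x := hvx ▸ huv
            exact (ENNReal.add_right_inj (a := x) (b := u) (c := 0) hbt).mp
              (by rw [add_zero, add_comm x u]; exact h)
          have hFm0 : mTransform x m F u = 0 := by
            rw [hu0, mTransform_apply_lt hb, m_zero hm, hF.2.1]
          rw [hFm0, T_zero_left hT (hGmb v)]
          exact hsup0
      · -- u = x, v = 0
        have hux : u = x := le_antisymm (huv ▸ le_self_add) (not_lt.1 hub)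
        have hv0 : v = 0 := by
          have h : x + v = x := hux ▸ huv
          exact (ENNReal.add_right_inj (a := x) (b := v) (c := 0) hbt).mp
            (by rw [add_zero]; exact h)
        have hGm0 : mTransform x m G v = 0 := by
          rw [hv0, mTransform_apply_lt hb, m_zero hm, hG.2.1]
        rw [hGm0, T_zero_right hT (hFmb u)]
        exact hsup0
    · rw [mTransform_apply_gt hbt hxb]
      exact ciSup_le fun p => (hT.1 _ (hFmb _) _ (hGmb _)).2
end
end

section
/- Let α > 1 and β = α/(α−1). For any normed spaces (V₁,‖·‖₁), (V₂,‖·‖₂), any continuous strictly increasing G : [0,∞] → [0,1] with continuous strictly increasing inverse, and any nonzero p₁, p₂, the identity T_G(G(t/‖p₁‖₁^α), G(t/‖p₂‖₂^α)) = G(t/‖(p₁,p₂)‖_β^α) holds for all t > 0, where T_G(x,y) = G(( (G⁻¹(x))^{1/(1−α)} + (G⁻¹(y))^{1/(1−α)} )^{1−α}) and ‖(p₁,p₂)‖_β = (‖p₁‖₁^β + ‖p₂‖₂^β)^{1/β}. -/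
/-! The generator `u ↦ u ^ (1/(1-α))` of `T_G` (note `G⁻¹ ∘ G = id` on `[0, ∞)`) sends
`t / x ^ α` to `t ^ (1/(1-α)) * x ^ β`, since `-α/(1-α) = β`. So it turns `t / ‖pᵢ‖ ^ α` into
a common multiple of `‖pᵢ‖ ^ β`; adding and applying the inverse `v ↦ v ^ (1-α)` gives
`t / (‖p₁‖ ^ β + ‖p₂‖ ^ β) ^ (α-1)`, and `(α-1) = α/β` makes this `t / ‖(p₁,p₂)‖_β ^ α`. -/

namespace Real

variable {α t s x : ℝ}

theorem div_rpow_rpow_one_div_one_sub (ht : 0 ≤ t) (hx : 0 ≤ x) :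
    (t / x ^ α) ^ (1 / (1 - α)) = t ^ (1 / (1 - α)) * x ^ (α / (α - 1)) := by
  have hexp : α * (1 / (1 - α)) = -(α / (α - 1)) := by
    rw [← neg_sub α 1, one_div_neg_eq_neg_one_div, mul_neg, mul_one_div]
  rw [div_rpow ht (rpow_nonneg hx _), ← rpow_mul hx, hexp, rpow_neg hx, div_inv_eq_mul]

theorem rpow_one_div_one_sub_mul_rpow_one_sub (hα : α ≠ 1) (ht : 0 ≤ t) (hs : 0 ≤ s) :
    (t ^ (1 / (1 - α)) * s) ^ (1 - α) = t * s ^ (1 - α) := by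
  rw [mul_rpow (rpow_nonneg ht _) hs, ← rpow_mul ht, one_div_mul_cancel (sub_ne_zero.2 hα.symm),
    rpow_one]

theorem rpow_one_div_conjExponent_rpow (hα : α ≠ 0) (hs : 0 ≤ s) :
    (s ^ (1 / (α / (α - 1)))) ^ α = s ^ (α - 1) := by
  rw [← rpow_mul hs, one_div_div, div_mul_cancel₀ _ hα]

theorem rpow_one_sub_add_div_rpow_eq_div_rpow {a b β : ℝ} (hα₀ : α ≠ 0) (hα₁ : α ≠ 1)
    (hβ : β = α / (α - 1)) (ht : 0 ≤ t) (ha : 0 ≤ a) (hb : 0 ≤ b) :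
    ((t / a ^ α) ^ (1 / (1 - α)) + (t / b ^ α) ^ (1 / (1 - α))) ^ (1 - α) =
      t / ((a ^ β + b ^ β) ^ (1 / β)) ^ α := by
  have hS : 0 ≤ a ^ β + b ^ β := by positivity
  subst hβ
  rw [div_rpow_rpow_one_div_one_sub ht ha, div_rpow_rpow_one_div_one_sub ht hb, ← mul_add,
    rpow_one_div_one_sub_mul_rpow_one_sub hα₁ ht hS, rpow_one_div_conjExponent_rpow hα₀ hS,
    ← neg_sub α 1, rpow_neg hS, ← div_eq_mul_inv]

end Real

theorem TG_product_alpha_simple_general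
    (V₁ V₂ : Type*) [NormedAddCommGroup V₁] [NormedAddCommGroup V₂]
    (α : ℝ) (hα : 1 < α) (β : ℝ) (hβ : β = α / (α - 1))
    (G : ℝ → ℝ) (Ginv : ℝ → ℝ)
    (hGinv : ∀ x ∈ Set.Ici (0:ℝ), Ginv (G x) = x)
    (p₁ : V₁) (p₂ : V₂)
    (t : ℝ) (ht : 0 < t) :
    G (((Ginv (G (t / ‖p₁‖ ^ α))) ^ (1 / (1 - α)) +
        (Ginv (G (t / ‖p₂‖ ^ α))) ^ (1 / (1 - α))) ^ (1 - α)) =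
      G (t / ((‖p₁‖ ^ β + ‖p₂‖ ^ β) ^ (1 / β)) ^ α) := by
  have hGinv_div (x : ℝ) (hx : 0 ≤ x) : Ginv (G (t / x ^ α)) = t / x ^ α :=
    hGinv _ (div_nonneg ht.le (Real.rpow_nonneg hx _))
  rw [hGinv_div _ (norm_nonneg p₁), hGinv_div _ (norm_nonneg p₂),
    Real.rpow_one_sub_add_div_rpow_eq_div_rpow (zero_lt_one.trans hα).ne' hα.ne' hβ ht.le
      (norm_nonneg p₁) (norm_nonneg p₂)]

/-- The `T_G`-product of two `α`-simple PN spaces is `α`-simple for the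
`β`-norm, `β = α/(α-1)`:
`T_G (G (t/‖p₁‖₁^α)) (G (t/‖p₂‖₂^α)) = G (t/‖(p₁,p₂)‖_β^α)`. -/
theorem TG_product_alpha_simple
    (V₁ V₂ : Type*) [NormedAddCommGroup V₁] [NormedSpace ℝ V₁]
    [NormedAddCommGroup V₂] [NormedSpace ℝ V₂]
    (α : ℝ) (hα : 1 < α) (β : ℝ) (hβ : β = α / (α - 1))
    (G : ℝ → ℝ) (hGc : ContinuousOn G (Set.Ici 0))
    (hGm : StrictMonoOn G (Set.Ici 0))
    (Ginv : ℝ → ℝ) (hGinvc : ContinuousOn Ginv (G '' Set.Ici 0))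
    (hGinvm : StrictMonoOn Ginv (G '' Set.Ici 0))
    (hGinv : ∀ x ∈ Set.Ici (0:ℝ), Ginv (G x) = x)
    (p₁ : V₁) (hp₁ : p₁ ≠ 0) (p₂ : V₂) (hp₂ : p₂ ≠ 0)
    (t : ℝ) (ht : 0 < t) :
    G (((Ginv (G (t / ‖p₁‖ ^ α))) ^ (1 / (1 - α)) +
        (Ginv (G (t / ‖p₂‖ ^ α))) ^ (1 / (1 - α))) ^ (1 - α)) =
      G (t / ((‖p₁‖ ^ β + ‖p₂‖ ^ β) ^ (1 / β)) ^ α) :=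
  TG_product_alpha_simple_general V₁ V₂ α hα β hβ G Ginv hGinv p₁ p₂ t ht
end

section
/- Let (V, ν, τ_T, 𝐓) be a PN space where T is a left-continuous t-norm and 𝐓(F,G)(x) = T(F(x), G(x)), and let m ∈ M_b be τ_T-superadditive. Define ν_m(p) := ν_p ∘ m (the m-transform). Then (V, ν_m, τ_T, 𝐓) is again a PN space: (N1) ν_m(p) = ε₀ iff p = θ; (N2) ν_m(−p) = ν_m(p); (N3) ν_m(p+q) ≥ τ_T(ν_m(p), ν_m(q)); (N4) ν_m(p) ≤ 𝐓(ν_m(αp), ν_m((1−α)p)) for all α ∈ [0,1]. -/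
open scoped ENNReal

noncomputable section

lemma MemMb_m_zero {b : ℝ≥0∞} {m : ℝ≥0∞ → ℝ≥0∞} (hm : MemMb b m) : m 0 = 0 := by
  obtain ⟨hb, -, hsm, him⟩ := hm
  have h0 : (0:ℝ≥0∞) ∈ m '' Set.Iic b := by rw [him]; trivial
  obtain ⟨y, hy, hmy⟩ := h0
  have := hsm.monotoneOn (Set.mem_Iic.2 (zero_le : (0:ℝ≥0∞) ≤ b)) hy (zero_le : (0:ℝ≥0∞) ≤ y)
  exact le_antisymm (hmy ▸ this) zero_le

lemma MemMb_m_b_top {b : ℝ≥0∞} {m : ℝ≥0∞ → ℝ≥0∞} (hm : MemMb b m) : m b = ⊤ := by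
  obtain ⟨hb, -, hsm, him⟩ := hm
  have h0 : (⊤:ℝ≥0∞) ∈ m '' Set.Iic b := by rw [him]; trivial
  obtain ⟨y, hy, hmy⟩ := h0
  have := hsm.monotoneOn hy (Set.mem_Iic.2 le_rfl) hy
  exact top_le_iff.1 (hmy ▸ this)

lemma MemMb_m_eq_zero_iff {b : ℝ≥0∞} {m : ℝ≥0∞ → ℝ≥0∞} (hm : MemMb b m)
    {x : ℝ≥0∞} (hx : x ≤ b) : m x = 0 ↔ x = 0 := by
  constructor
  · intro h
    by_contra hne
    have h0 : (0:ℝ≥0∞) < x := pos_iff_ne_zero.2 hne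
    have := hm.2.2.1 (Set.mem_Iic.2 (zero_le : (0:ℝ≥0∞) ≤ b)) (Set.mem_Iic.2 hx) h0
    rw [MemMb_m_zero hm, h] at this
    exact lt_irrefl _ this
  · intro h; rw [h, MemMb_m_zero hm]

lemma mT_mono {b : ℝ≥0∞} {m : ℝ≥0∞ → ℝ≥0∞} (hm : MemMb b m) {F G : DF}
    (h : ∀ x, F x ≤ G x) (hG : ∀ x, G x ≤ 1) :
    ∀ x, mTransform b m F x ≤ mTransform b m G x := by
  intro x
  unfold mTransform
  by_cases hb : b = ⊤
  · simp only [hb, if_true]; exact h _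
  · simp only [hb, if_false]
    by_cases hx : x < b
    · simp only [hx, if_true]; exact h _
    · by_cases hxb : x = b
      · subst hxb
        simp only [lt_irrefl, if_false, if_true]
        haveI : Nonempty (Set.Iio x) := ⟨⟨0, hm.1⟩⟩
        have hbdd : BddAbove (Set.range fun y : Set.Iio x => G (m y)) :=
          ⟨1, by rintro _ ⟨y, rfl⟩; exact hG _⟩
        exact ciSup_mono hbdd fun y => h _
      · simp only [hx, if_false, hxb, if_false]; exact le_rfl

/-- If `(V, ν, τ_T, 𝐓)` is a PN space, `T` a left-continuous t-norm, and
`m ∈ M_b` is `τ_T`-superadditive, then the `m`-transform `ν_m p := (ν p) ∘ m`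
again satisfies the PN space axioms (N1)–(N4). -/
theorem mTransform_of_PN_space_is_PN_space
    (V : Type*) [AddCommGroup V] [Module ℝ V]
    (T : ℝ → ℝ → ℝ) (hT : IsTNorm T)
    (hTlc : ∀ b x : ℝ, Filter.Tendsto (fun a => T a b)
      (nhdsWithin x (Set.Iio x)) (nhds (T x b)))
    (ν : V → DF) (hν : ∀ p, IsDDF (ν p))
    (hN1 : ∀ p, ν p = stepDF 0 ↔ p = 0)
    (hN2 : ∀ p, ν (-p) = ν p)
    (hN3 : ∀ p q, tauT T (ν p) (ν q) ≤ ν (p + q))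
    (hN4 : ∀ α ∈ Set.Icc (0:ℝ) 1, ∀ p : V,
      ν p ≤ pointT T (ν (α • p)) (ν ((1 - α) • p)))
    (b : ℝ≥0∞) (m : ℝ≥0∞ → ℝ≥0∞) (hm : MemMb b m)
    (hsuper : ∀ F G, IsDDF F → IsDDF G →
      mTransform b m (tauT T F G) ≥ tauT T (mTransform b m F) (mTransform b m G)) :
    (∀ p, mTransform b m (ν p) = stepDF 0 ↔ p = 0) ∧
    (∀ p, mTransform b m (ν (-p)) = mTransform b m (ν p)) ∧
    (∀ p q, tauT T (mTransform b m (ν p)) (mTransform b m (ν q)) ≤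
      mTransform b m (ν (p + q))) ∧
    (∀ α ∈ Set.Icc (0:ℝ) 1, ∀ p : V,
      mTransform b m (ν p) ≤
        pointT T (mTransform b m (ν (α • p))) (mTransform b m (ν ((1 - α) • p)))) := by
  obtain ⟨hb0, hmc, hsm, him⟩ := hm
  have hT11 : T 1 1 = 1 := hT.2.2.2.2 1 ⟨zero_le_one, le_rfl⟩
  have hTmono2 : ∀ a c c' : ℝ, c ≤ c' → T a c ≤ T a c' := by
    intro a c c' h
    rw [hT.2.1 a c, hT.2.1 a c']
    exact hT.2.2.2.1 _ _ _ h
  refine ⟨?_, ?_, ?_, ?_⟩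
  · -- N1
    intro p
    constructor
    · intro heq
      rw [← hN1 p]
      funext t
      have hstep : ∀ x : ℝ≥0∞, x ≤ b → stepDF 0 x = stepDF 0 (m x) := by
        intro x hx
        simp only [stepDF, nonpos_iff_eq_zero, MemMb_m_eq_zero_iff ⟨hb0, hmc, hsm, him⟩ hx]
      by_cases hb : b = ⊤
      · have ht : t ∈ m '' Set.Iic b := by rw [him]; trivial
        obtain ⟨x, hx, rfl⟩ := ht
        have := congrFun heq x
        rw [mTransform, if_pos hb] at this
        rw [this, hstep x hx]
      · rcases eq_or_ne t ⊤ with rfl | htop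
        · rw [(hν p).2.2.1]
          simp [stepDF]
        · have ht : t ∈ m '' Set.Iic b := by rw [him]; trivial
          obtain ⟨x, hx, rfl⟩ := ht
          have hxb : x ≠ b := by
            intro h
            exact htop (h ▸ MemMb_m_b_top ⟨hb0, hmc, hsm, him⟩)
          have hxlt : x < b := lt_of_le_of_ne hx hxb
          have := congrFun heq x
          rw [mTransform, if_neg hb] at this
          simp only [hxlt, if_true] at this
          rw [this, hstep x hx]
    · rintro rfl
      have hν0 : ν 0 = stepDF 0 := (hN1 0).2 rfl
      rw [hν0]
      funext x
      have hstep : ∀ y : ℝ≥0∞, y ≤ b → stepDF 0 (m y) = stepDF 0 y := by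
        intro y hy
        simp only [stepDF, nonpos_iff_eq_zero, MemMb_m_eq_zero_iff ⟨hb0, hmc, hsm, him⟩ hy]
      rw [mTransform]
      by_cases hb : b = ⊤
      · rw [if_pos hb]
        exact hstep x (hb ▸ le_top)
      · rw [if_neg hb]
        by_cases hx : x < b
        · simp only [hx, if_true]
          exact hstep x hx.le
        · by_cases hxb : x = b
          · simp only [hxb, lt_irrefl, if_false, if_true]
            have hbne : b ≠ 0 := hb0.ne'
            have hhalf : b / 2 < b := ENNReal.half_lt_self hbne hb
            have hhalf0 : b / 2 ≠ 0 := (ENNReal.half_pos hbne).ne'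
            haveI : Nonempty (Set.Iio b) := ⟨⟨0, hb0⟩⟩
            have hub : ∀ y : Set.Iio b, stepDF 0 (m y) ≤ 1 := by
              intro y
              simp only [stepDF]
              split <;> norm_num
            have h1 : stepDF 0 b = 1 := by
              simp [stepDF, hbne]
            rw [h1]
            refine le_antisymm (ciSup_le hub) ?_
            have hval : stepDF 0 (m (⟨b / 2, hhalf⟩ : Set.Iio b)) = 1 := by
              have : m (b / 2) ≠ 0 := by
                rw [Ne, MemMb_m_eq_zero_iff ⟨hb0, hmc, hsm, him⟩ hhalf.le]
                exact hhalf0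
              simp [stepDF, this]
            have hbdd : BddAbove (Set.range fun y : Set.Iio b => stepDF 0 (m y)) :=
              ⟨1, by rintro _ ⟨y, rfl⟩; exact hub y⟩
            have hle := le_ciSup hbdd (⟨b / 2, hhalf⟩ : Set.Iio b)
            rw [hval] at hle
            exact hle
          · simp only [hx, if_false, hxb, if_false]
            have : ¬ x ≤ (0:ℝ≥0∞) := by
              simp only [nonpos_iff_eq_zero]
              intro h
              exact hx (h ▸ hb0)
            simp [stepDF, this]
  · -- N2
    intro p
    rw [hN2]
  · -- N3
    intro p q
    refine le_trans (hsuper (ν p) (ν q) (hν p) (hν q)) ?_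
    intro x
    exact mT_mono ⟨hb0, hmc, hsm, him⟩ (fun t => hN3 p q t)
      (fun t => ((hν (p + q)).2.2.2.1 t).2) x
  · -- N4
    intro α hα p x
    have key : ∀ t, ν p t ≤ T (ν (α • p) t) (ν ((1 - α) • p) t) := fun t => hN4 α hα p t
    have hG1 : ∀ t, ν (α • p) t ≤ 1 := fun t => ((hν _).2.2.2.1 t).2
    have hH1 : ∀ t, ν ((1 - α) • p) t ≤ 1 := fun t => ((hν _).2.2.2.1 t).2
    simp only [pointT, mTransform]
    by_cases hb : b = ⊤
    · simp only [hb, if_true]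
      exact key _
    · simp only [hb, if_false]
      by_cases hx : x < b
      · simp only [hx, if_true]
        exact key _
      · by_cases hxb : x = b
        · subst hxb
          simp only [lt_irrefl, if_false, if_true]
          haveI : Nonempty (Set.Iio x) := ⟨⟨0, hb0⟩⟩
          have bddG : BddAbove (Set.range fun y : Set.Iio x => ν (α • p) (m y)) :=
            ⟨1, by rintro _ ⟨y, rfl⟩; exact hG1 _⟩
          have bddH : BddAbove (Set.range fun y : Set.Iio x => ν ((1 - α) • p) (m y)) :=
            ⟨1, by rintro _ ⟨y, rfl⟩; exact hH1 _⟩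
          refine ciSup_le fun y => ?_
          refine le_trans (key (m y)) ?_
          refine le_trans (hT.2.2.2.1 _ _ _ (le_ciSup bddG y)) ?_
          exact hTmono2 _ _ _ (le_ciSup bddH y)
        · simp only [hx, if_false, hxb, if_false]
          rw [hT11]
end
end

section
/- Let (ν^i) be a sequence of maps ν^i : V_i → Δ⁺ each satisfying the PN axioms with triangle functions τ_i ≥ τ_W and τ_i* ≤ τ_{W*}. Define ν^Σ on V = Π V_i by ν^Σ_p := Σ_{i=1}^∞ 2^{−i} ν^i_{p_i} (pointwise convergent series of distribution functions). Then ν^Σ satisfies: (N1) ν^Σ_p = ε₀ iff p = θ; (N2) ν^Σ_{−p} = ν^Σ_p; (N3) ν^Σ_{p+q} ≥ τ_W(ν^Σ_p, ν^Σ_q); (N4) ν^Σ_p ≤ τ_{W*}(ν^Σ_{αp}, ν^Σ_{(1−α)p}) for all α ∈ [0,1], where τ_W(F,G)(x) = sup_{u+v=x} max(F(u)+G(v)−1, 0) and τ_{W*}(F,G)(x) = inf_{u+v=x} min(F(u)+G(v), 1). -/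
open scoped ENNReal

noncomputable section

/-- `τ_W(F,G)(x) = sup_{u+v=x} max (F u + G v - 1) 0`. -/
def tauW (F G : DF) : DF :=
  fun x => ⨆ p : {q : ℝ≥0∞ × ℝ≥0∞ // q.1 + q.2 = x},
    max (F p.1.1 + G p.1.2 - 1) 0

/-- `τ_{W*}(F,G)(x) = inf_{u+v=x} min (F u + G v) 1`. -/
def tauWstar (F G : DF) : DF :=
  fun x => ⨅ p : {q : ℝ≥0∞ × ℝ≥0∞ // q.1 + q.2 = x},
    min (F p.1.1 + G p.1.2) 1

/-!
The weights `2^{-(i+1)}` are positive and sum to `1`, so the series is a weighted mean of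
its terms. Each axiom of `ν^i` is a pointwise relation between values in `[0,1]` of the form
`a + b - 1 ≤ c` (for `τ_W`) or `c ≤ a + b` and `c ≤ 1` (for `τ_{W*}`), and such relations
survive weighted averaging; (N1) uses that a mean of values `≤ 1` equals `1` only if every
term does.
-/

open Set

/-- The paper's `Σ_{i ≥ 1} 2^{-i} a_i`, reindexed from `0`. -/
def dyadicMean (a : ℕ → ℝ) : ℝ := ∑' i, a i / 2 ^ (i + 1)

def sigmaDF (F : ℕ → DF) : DF := fun x => dyadicMean fun i => F i x

section DyadicMean

variable {a b c : ℕ → ℝ}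

lemma hasSum_div_two_pow_succ (r : ℝ) : HasSum (fun i : ℕ => r / 2 ^ (i + 1)) r := by
  simpa only [pow_succ', div_div] using hasSum_geometric_two' r

lemma dyadicMean_const (r : ℝ) : dyadicMean (fun _ => r) = r :=
  (hasSum_div_two_pow_succ r).tsum_eq

lemma summable_div_two_pow_succ (ha : ∀ i, a i ∈ Icc (0 : ℝ) 1) :
    Summable fun i => a i / 2 ^ (i + 1) :=
  (hasSum_div_two_pow_succ 1).summable.of_nonneg_of_le
    (fun i => div_nonneg (ha i).1 (by positivity))
    (fun i => div_le_div_of_nonneg_right (ha i).2 (by positivity))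

lemma hasSum_dyadicMean (ha : ∀ i, a i ∈ Icc (0 : ℝ) 1) :
    HasSum (fun i => a i / 2 ^ (i + 1)) (dyadicMean a) :=
  (summable_div_two_pow_succ ha).hasSum

lemma dyadicMean_nonneg (ha : ∀ i, 0 ≤ a i) : 0 ≤ dyadicMean a :=
  tsum_nonneg fun i => div_nonneg (ha i) (by positivity)

lemma dyadicMean_le_one (ha : ∀ i, a i ∈ Icc (0 : ℝ) 1) : dyadicMean a ≤ 1 :=
  hasSum_le (fun i => div_le_div_of_nonneg_right (ha i).2 (by positivity))
    (hasSum_dyadicMean ha) (hasSum_div_two_pow_succ 1)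

lemma dyadicMean_eq_one_iff (ha : ∀ i, a i ∈ Icc (0 : ℝ) 1) :
    dyadicMean a = 1 ↔ ∀ i, a i = 1 := by
  refine ⟨fun h i => ?_, fun h => by rw [funext h, dyadicMean_const]⟩
  by_contra hi
  have hlt : dyadicMean a < 1 :=
    hasSum_lt (fun j => div_le_div_of_nonneg_right (ha j).2 (by positivity))
      (div_lt_div_of_pos_right (lt_of_le_of_ne (ha i).2 hi) (by positivity))
      (hasSum_dyadicMean ha) (hasSum_div_two_pow_succ 1)
  exact hlt.ne h

lemma dyadicMean_add_sub_one_le (ha : ∀ i, a i ∈ Icc (0 : ℝ) 1)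
    (hb : ∀ i, b i ∈ Icc (0 : ℝ) 1) (hc : ∀ i, c i ∈ Icc (0 : ℝ) 1)
    (h : ∀ i, a i + b i - 1 ≤ c i) :
    dyadicMean a + dyadicMean b - 1 ≤ dyadicMean c :=
  hasSum_le (fun i => by rw [← add_div, ← sub_div]; gcongr; exact h i)
    (((hasSum_dyadicMean ha).add (hasSum_dyadicMean hb)).sub (hasSum_div_two_pow_succ 1))
    (hasSum_dyadicMean hc)

lemma dyadicMean_le_add (ha : ∀ i, a i ∈ Icc (0 : ℝ) 1)
    (hb : ∀ i, b i ∈ Icc (0 : ℝ) 1) (hc : ∀ i, c i ∈ Icc (0 : ℝ) 1)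
    (h : ∀ i, c i ≤ a i + b i) :
    dyadicMean c ≤ dyadicMean a + dyadicMean b :=
  hasSum_le (fun i => by rw [← add_div]; gcongr; exact h i)
    (hasSum_dyadicMean hc) ((hasSum_dyadicMean ha).add (hasSum_dyadicMean hb))

end DyadicMean

section TriangleFunctions

variable {F G : DF}

lemma add_sub_one_le_tauW (hF : ∀ x, F x ≤ 1) (hG : ∀ x, G x ≤ 1) (u v : ℝ≥0∞) :
    F u + G v - 1 ≤ tauW F G (u + v) := by
  have hbdd : BddAbove (range fun p : {q : ℝ≥0∞ × ℝ≥0∞ // q.1 + q.2 = u + v} =>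
      max (F p.1.1 + G p.1.2 - 1) 0) := by
    refine ⟨1, ?_⟩
    rintro _ ⟨p, rfl⟩
    exact max_le (by linarith [hF p.1.1, hG p.1.2]) zero_le_one
  exact (le_max_left _ _).trans (le_ciSup hbdd ⟨(u, v), rfl⟩)

lemma tauW_apply_le {x : ℝ≥0∞} {r : ℝ} (hr : 0 ≤ r)
    (h : ∀ u v, u + v = x → F u + G v - 1 ≤ r) : tauW F G x ≤ r :=
  Real.iSup_le (fun p => max_le (h _ _ p.2) hr) hr

lemma tauWstar_le_add (hF : ∀ x, 0 ≤ F x) (hG : ∀ x, 0 ≤ G x) (u v : ℝ≥0∞) :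
    tauWstar F G (u + v) ≤ F u + G v := by
  have hbdd : BddBelow (range fun p : {q : ℝ≥0∞ × ℝ≥0∞ // q.1 + q.2 = u + v} =>
      min (F p.1.1 + G p.1.2) 1) :=
    ⟨0, by rintro _ ⟨p, rfl⟩; exact le_min (add_nonneg (hF _) (hG _)) zero_le_one⟩
  exact (ciInf_le hbdd ⟨(u, v), rfl⟩).trans (min_le_left _ _)

lemma le_tauWstar_apply {x : ℝ≥0∞} {r : ℝ} (hr : r ≤ 1)
    (h : ∀ u v, u + v = x → r ≤ F u + G v) : r ≤ tauWstar F G x :=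
  have : Nonempty {q : ℝ≥0∞ × ℝ≥0∞ // q.1 + q.2 = x} := ⟨⟨(x, 0), add_zero x⟩⟩
  le_ciInf fun p => le_min (h _ _ p.2) hr

end TriangleFunctions

section SigmaDF

variable {F G H : ℕ → DF}

lemma sigmaDF_eq_stepDF_zero_iff (hF : ∀ i x, F i x ∈ Icc (0 : ℝ) 1)
    (hF0 : ∀ i, F i 0 = 0) : sigmaDF F = stepDF 0 ↔ ∀ i, F i = stepDF 0 := by
  refine ⟨fun h i => funext fun x => ?_, fun h => funext fun x => ?_⟩
  · rcases eq_zero_or_pos x with rfl | hx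
    · simp [hF0, stepDF]
    · have hx1 : stepDF 0 x = 1 := if_neg (not_le.2 hx)
      rw [hx1]
      exact (dyadicMean_eq_one_iff fun j => hF j x).1 ((congrFun h x).trans hx1) i
  · simp only [sigmaDF, h, dyadicMean_const]

lemma tauW_sigmaDF_le (hF : ∀ i x, F i x ∈ Icc (0 : ℝ) 1)
    (hG : ∀ i x, G i x ∈ Icc (0 : ℝ) 1) (hH : ∀ i x, H i x ∈ Icc (0 : ℝ) 1)
    (h : ∀ i, tauW (F i) (G i) ≤ H i) :
    tauW (sigmaDF F) (sigmaDF G) ≤ sigmaDF H := fun x => by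
  refine tauW_apply_le (dyadicMean_nonneg fun i => (hH i x).1) ?_
  rintro u v rfl
  refine dyadicMean_add_sub_one_le (fun i => hF i u) (fun i => hG i v) (fun i => hH i _)
    fun i => ?_
  exact (add_sub_one_le_tauW (fun y => (hF i y).2) (fun y => (hG i y).2) u v).trans (h i _)

lemma sigmaDF_le_tauWstar (hF : ∀ i x, F i x ∈ Icc (0 : ℝ) 1)
    (hG : ∀ i x, G i x ∈ Icc (0 : ℝ) 1) (hH : ∀ i x, H i x ∈ Icc (0 : ℝ) 1)
    (h : ∀ i, H i ≤ tauWstar (F i) (G i)) :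
    sigmaDF H ≤ tauWstar (sigmaDF F) (sigmaDF G) := fun x => by
  refine le_tauWstar_apply (dyadicMean_le_one fun i => hH i x) ?_
  rintro u v rfl
  refine dyadicMean_le_add (fun i => hF i u) (fun i => hG i v) (fun i => hH i _) fun i => ?_
  exact (h i _).trans (tauWstar_le_add (fun y => (hF i y).1) (fun y => (hG i y).1) u v)

end SigmaDF

theorem sigma_product_is_Menger_under_W_general
    (V : ℕ → Type*) [∀ i, AddCommGroup (V i)] [∀ i, Module ℝ (V i)]
    (ν : ∀ i, V i → DF) (hν : ∀ i v, IsDDF (ν i v))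
    (τ τs : ℕ → DF → DF → DF)
    (hτW : ∀ i F G, IsDDF F → IsDDF G → tauW F G ≤ τ i F G)
    (hτsW : ∀ i F G, IsDDF F → IsDDF G → τs i F G ≤ tauWstar F G)
    (hN1 : ∀ i v, ν i v = stepDF 0 ↔ v = 0)
    (hN2 : ∀ i v, ν i (-v) = ν i v)
    (hN3 : ∀ i v w, τ i (ν i v) (ν i w) ≤ ν i (v + w))
    (hN4 : ∀ i, ∀ α ∈ Set.Icc (0:ℝ) 1, ∀ v : V i,
      ν i v ≤ τs i (ν i (α • v)) (ν i ((1 - α) • v))) :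
    let νS : (∀ i, V i) → DF := fun p x => ∑' i : ℕ, ν i (p i) x / 2 ^ (i + 1)
    (∀ p, νS p = stepDF 0 ↔ p = 0) ∧
    (∀ p, νS (-p) = νS p) ∧
    (∀ p q, tauW (νS p) (νS q) ≤ νS (p + q)) ∧
    (∀ α ∈ Set.Icc (0:ℝ) 1, ∀ p,
      νS p ≤ tauWstar (νS (α • p)) (νS ((1 - α) • p))) := by
  intro νS
  have hνS : ∀ p, νS p = sigmaDF fun i => ν i (p i) := fun _ => rfl
  have hI : ∀ p : ∀ i, V i, ∀ i x, ν i (p i) x ∈ Icc (0 : ℝ) 1 :=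
    fun p i => (hν i (p i)).2.2.2.1
  refine ⟨fun p => ?_, fun p => ?_, fun p q => ?_, fun α hα p => ?_⟩
  · rw [hνS, sigmaDF_eq_stepDF_zero_iff (hI p) fun i => (hν i (p i)).2.1]
    simp only [hN1, funext_iff, Pi.zero_apply]
  · simp only [hνS, Pi.neg_apply, hN2]
  · exact tauW_sigmaDF_le (hI p) (hI q) (hI (p + q))
      fun i => (hτW i _ _ (hν i _) (hν i _)).trans (hN3 i (p i) (q i))
  · exact sigmaDF_le_tauWstar (hI (α • p)) (hI ((1 - α) • p)) (hI p)
      fun i => (hN4 i α hα (p i)).trans (hτsW i _ _ (hν i _) (hν i _))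

/-- The Σ-product `ν^Σ_p := Σ_{i=1}^∞ 2^{-i} ν^i_{p_i}` of a countable family of
PN spaces with `τ_i ≥ τ_W` and `τ_i* ≤ τ_{W*}` satisfies the PN axioms
(N1)–(N4) with triangle functions `τ_W` and `τ_{W*}`. -/
theorem sigma_product_is_Menger_under_W
    (V : ℕ → Type*) [∀ i, AddCommGroup (V i)] [∀ i, Module ℝ (V i)]
    (ν : ∀ i, V i → DF) (hν : ∀ i v, IsDDF (ν i v))
    (τ τs : ℕ → DF → DF → DF)
    (hτ : ∀ i, IsTriangleFn (τ i)) (hτs : ∀ i, IsTriangleFn (τs i))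
    (hτW : ∀ i F G, IsDDF F → IsDDF G → tauW F G ≤ τ i F G)
    (hτsW : ∀ i F G, IsDDF F → IsDDF G → τs i F G ≤ tauWstar F G)
    (hN1 : ∀ i v, ν i v = stepDF 0 ↔ v = 0)
    (hN2 : ∀ i v, ν i (-v) = ν i v)
    (hN3 : ∀ i v w, τ i (ν i v) (ν i w) ≤ ν i (v + w))
    (hN4 : ∀ i, ∀ α ∈ Set.Icc (0:ℝ) 1, ∀ v : V i,
      ν i v ≤ τs i (ν i (α • v)) (ν i ((1 - α) • v))) :
    let νS : (∀ i, V i) → DF := fun p x => ∑' i : ℕ, ν i (p i) x / 2 ^ (i + 1)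
    (∀ p, νS p = stepDF 0 ↔ p = 0) ∧
    (∀ p, νS (-p) = νS p) ∧
    (∀ p q, tauW (νS p) (νS q) ≤ νS (p + q)) ∧
    (∀ α ∈ Set.Icc (0:ℝ) 1, ∀ p,
      νS p ≤ tauWstar (νS (α • p)) (νS ((1 - α) • p))) :=
  sigma_product_is_Menger_under_W_general V ν hν τ τs hτW hτsW hN1 hN2 hN3 hN4
end
end
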